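/- arXiv:2002.10039 — 2 statements merged into one kernel-verified Lean document; each statement's English description precedes it below -/
import Mathlib

section
/- Let R ≥ 1 and let T be a tree that contains no R-tripod as a subgraph, and let Q be a longest path in T with vertex set V(Q). Then every vertex u of T satisfies d_T(u, V(Q)) < R, i.e., there exists v ∈ V(Q) with d_T(u,v) < R. -/
/-- `G` contains an `R`-tripod as a subgraph. -/
def ContainsTripod {W : Type*} (G : SimpleGraph W) (R : ℕ) : Prop :=
  ∃ (v v₁ v₂ v₃ : W) (p₁ : G.Walk v v₁) (p₂ : G.Walk v v₂) (p₃ : G.Walk v v₃),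
    p₁.IsPath ∧ p₂.IsPath ∧ p₃.IsPath ∧
    (∀ u ∈ p₂.support, R ≤ G.dist v₁ u) ∧
    (∀ u ∈ p₃.support, R ≤ G.dist v₁ u) ∧
    (∀ u ∈ p₁.support, R ≤ G.dist v₂ u) ∧
    (∀ u ∈ p₃.support, R ≤ G.dist v₂ u) ∧
    (∀ u ∈ p₁.support, R ≤ G.dist v₃ u) ∧
    (∀ u ∈ p₂.support, R ≤ G.dist v₃ u)

section Helpers

open SimpleGraph Walk

variable {V : Type*} [DecidableEq V] {T : SimpleGraph V}

/-- In a tree, every path realizes the distance. -/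
lemma tree_path_length (hT : T.IsTree) {x y : V} (p : T.Walk x y) (hp : p.IsPath) :
    p.length = T.dist x y := by
  obtain ⟨q, hq⟩ := (hT.isConnected x y).exists_walk_length_eq_dist
  have hbp : q.bypass.IsPath := q.bypass_isPath
  have heq := (hT.existsUnique_path x y).unique hp hbp
  refine le_antisymm ?_ (T.dist_le p)
  calc p.length = q.bypass.length := by rw [heq]
    _ ≤ q.length := q.length_bypass_le
    _ = T.dist x y := hq

lemma append_isPath {x y z : V} {p : T.Walk x y} {q : T.Walk y z}
    (hp : p.IsPath) (hq : q.IsPath)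
    (hdisj : ∀ w ∈ p.support, w ∈ q.support → w = y) :
    (p.append q).IsPath := by
  have hcons : (y :: q.support.tail).Nodup := q.support_eq_cons ▸ hq.support_nodup
  rw [Walk.isPath_def, Walk.support_append]
  refine List.Nodup.append hp.support_nodup hcons.of_cons ?_
  intro w hwp hwq
  have hwq' : w ∈ q.support := by rw [q.support_eq_cons]; exact List.mem_cons_of_mem _ hwq
  have hwy : w = y := hdisj w hwp hwq'
  subst hwy
  exact (List.nodup_cons.mp hcons).1 hwq

lemma tree_far (hT : T.IsTree) {R : ℕ} {x y z : V} {p : T.Walk x y} {q : T.Walk y z}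
    (hp : p.IsPath) (hq : q.IsPath)
    (hdisj : ∀ w ∈ p.support, w ∈ q.support → w = y)
    (hR : R ≤ p.length) {w : V} (hw : w ∈ q.support) :
    R ≤ T.dist x w := by
  have hq' : (q.takeUntil w hw).IsPath := hq.takeUntil hw
  have hdisj' : ∀ u ∈ p.support, u ∈ (q.takeUntil w hw).support → u = y := fun u hu hu' =>
    hdisj u hu (q.support_takeUntil_subset hw hu')
  have hpath : (p.append (q.takeUntil w hw)).IsPath := append_isPath hp hq' hdisj'
  have hlen := tree_path_length hT _ hpath
  rw [Walk.length_append] at hlen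
  omega

end Helpers

open SimpleGraph in
/-- Let `T` be a tree with no `R`-tripod (`R ≥ 1`), and let `Q`
be a longest path in `T`. Then every vertex `u` of `T` is at distance `< R` from
some vertex of `Q`. -/
theorem tree_no_tripod_close_to_longest_path {V : Type*} [Fintype V]
    (T : SimpleGraph V) (hT : T.IsTree) (R : ℕ) (hR : 1 ≤ R)
    (htripod : ¬ ContainsTripod T R)
    (a b : V) (Q : T.Walk a b) (hQ : Q.IsPath)
    (hlongest : ∀ (x y : V) (P : T.Walk x y), P.IsPath → P.length ≤ Q.length) :
    ∀ u : V, ∃ v ∈ Q.support, T.dist u v < R := by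
  rw [ContainsTripod] at htripod
  classical
  intro u
  by_contra hcon
  push_neg at hcon
  -- pick the closest vertex of Q to u
  obtain ⟨v, hv, hmin⟩ := Q.support.toFinset.exists_min_image (fun w => T.dist u w)
    ⟨a, by simp [Q.start_mem_support]⟩
  rw [List.mem_toFinset] at hv
  -- a shortest path from v to u
  obtain ⟨P₀, hP₀⟩ := (hT.isConnected v u).exists_walk_length_eq_dist
  set P := P₀.bypass with hPdef
  have hP : P.IsPath := P₀.bypass_isPath
  have hPlen : P.length = T.dist v u :=
    le_antisymm (hP₀ ▸ P₀.length_bypass_le) (T.dist_le P)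
  have hRP : R ≤ P.length := by
    rw [hPlen, T.dist_comm]; exact hcon v hv
  -- P meets Q only at v
  have hPQ : ∀ w ∈ P.support, w ∈ Q.support → w = v := by
    intro w hw hwQ
    have h1 := P.take_spec hw
    have hlen2 : (P.takeUntil w hw).length + (P.dropUntil w hw).length = P.length := by
      rw [← Walk.length_append, h1]
    have hd : T.dist u w ≤ (P.dropUntil w hw).length := by
      have := T.dist_le (P.dropUntil w hw).reverse
      rwa [Walk.length_reverse] at this
    have h3 := hmin w (List.mem_toFinset.mpr hwQ)
    have hduv : T.dist u v = P.length := by rw [hPlen, T.dist_comm]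
    have h0 : (P.takeUntil w hw).length = 0 := by omega
    exact (Walk.eq_of_length_eq_zero h0).symm
  -- split Q at v
  set t := Q.takeUntil v hv with htdef
  set dd := Q.dropUntil v hv with hddef
  have ht : t.IsPath := hQ.takeUntil hv
  have hdd : dd.IsPath := hQ.dropUntil hv
  have htsub : t.support ⊆ Q.support := Q.support_takeUntil_subset hv
  have hdsub : dd.support ⊆ Q.support := Q.support_dropUntil_subset hv
  have hQlen : Q.length = t.length + dd.length := by
    conv_lhs => rw [← Q.take_spec hv]
    rw [Walk.length_append]
  have hdisj_td : ∀ w ∈ t.support, w ∈ dd.support → w = v := by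
    intro w hwt hwd
    by_contra hne
    have hwtail : w ∈ dd.support.tail := by
      rw [dd.support_eq_cons] at hwd
      rcases List.mem_cons.mp hwd with h | h
      · exact absurd h hne
      · exact h
    have hnodup := hQ.support_nodup
    rw [← Q.take_spec hv, Walk.support_append] at hnodup
    exact (List.disjoint_of_nodup_append hnodup) hwt hwtail
  have hmemrev : ∀ {x y : V} (p : T.Walk x y) (w : V),
      w ∈ p.reverse.support ↔ w ∈ p.support := by
    intro x y p w; rw [Walk.support_reverse, List.mem_reverse]
  -- R ≤ t.length
  have hRt : R ≤ t.length := by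
    have hdisj : ∀ w ∈ P.reverse.support, w ∈ dd.support → w = v := fun w hw hw' =>
      hPQ w ((hmemrev P w).mp hw) (hdsub hw')
    have hpb : (P.reverse.append dd).IsPath := append_isPath hP.reverse hdd hdisj
    have := hlongest u b _ hpb
    rw [Walk.length_append, Walk.length_reverse] at this
    omega
  -- R ≤ dd.length
  have hRd : R ≤ dd.length := by
    have hdisj : ∀ w ∈ P.reverse.support, w ∈ t.reverse.support → w = v := fun w hw hw' =>
      hPQ w ((hmemrev P w).mp hw) (htsub ((hmemrev t w).mp hw'))
    have hpa : (P.reverse.append t.reverse).IsPath := append_isPath hP.reverse ht.reverse hdisj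
    have := hlongest u a _ hpa
    rw [Walk.length_append, Walk.length_reverse, Walk.length_reverse] at this
    omega
  -- build the tripod
  refine htripod ⟨v, u, a, b, P, t.reverse, dd, hP, ht.reverse, hdd, ?_, ?_, ?_, ?_, ?_, ?_⟩
  · intro w hw; exact hcon w (htsub ((hmemrev t w).mp hw))
  · intro w hw; exact hcon w (hdsub hw)
  · intro w hw
    exact tree_far hT ht hP (fun z hz hz' => hPQ z hz' (htsub hz)) hRt hw
  · intro w hw
    exact tree_far hT ht hdd hdisj_td hRt hw
  · intro w hw
    refine tree_far hT hdd.reverse hP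
      (fun z hz hz' => hPQ z hz' (hdsub ((hmemrev dd z).mp hz))) ?_ hw
    rwa [Walk.length_reverse]
  · intro w hw
    refine tree_far hT hdd.reverse ht.reverse
      (fun z hz hz' => hdisj_td z ((hmemrev t z).mp hz') ((hmemrev dd z).mp hz)) ?_ hw
    rwa [Walk.length_reverse]
end

section
/- Let R ≥ 1 and let T be a tree with local density Δ(T) that contains no R-tripod as a subgraph. Then T admits an embedding into the line with distortion O(Δ(T)·R): there is a map f : V(T) → ℝ with d_T(p,q) ≤ |f(p)−f(q)| ≤ C·Δ(T)·R·d_T(p,q) for all p,q, for some absolute constant C. -/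
theorem List.exists_segment_isInfix {α : Type*} {M : List α} {p q : α} (hp : p ∈ M) (hq : q ∈ M)
    (hpq : p ≠ q) : ∃ Y, p :: Y ++ [q] <:+: M ∨ q :: Y ++ [p] <:+: M := by
  induction M with
  | nil => simp at hp
  | cons x t ih =>
    by_cases hxp : x = p
    · subst hxp
      obtain ⟨Y, Z, rfl⟩ := List.append_of_mem ((List.mem_cons.mp hq).resolve_left hpq.symm)
      exact ⟨Y, Or.inl ⟨[], Z, by simp⟩⟩
    by_cases hxq : x = q
    · subst hxq
      obtain ⟨Y, Z, rfl⟩ := List.append_of_mem ((List.mem_cons.mp hp).resolve_left hpq)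
      exact ⟨Y, Or.inr ⟨[], Z, by simp⟩⟩
    obtain ⟨Y, h⟩ := ih ((List.mem_cons.mp hp).resolve_left (Ne.symm hxp))
      ((List.mem_cons.mp hq).resolve_left (Ne.symm hxq))
    exact ⟨Y, h.imp List.infix_cons List.infix_cons⟩

namespace SimpleGraph

variable {V : Type*} {G : SimpleGraph V} {a b c u v w x y : V}

/-! ### Geodesics -/

namespace Walk

theorem dist_start_getVert {p : G.Walk a b} (hp : p.length = G.dist a b) (n : ℕ) :
    G.dist a (p.getVert n) = min n p.length := by
  rw [← length_eq_dist_of_subwalk hp (p.isSubwalk_take n), take_length]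

theorem dist_getVert_end {p : G.Walk a b} (hp : p.length = G.dist a b) (n : ℕ) :
    G.dist (p.getVert n) b = p.length - n := by
  rw [← length_eq_dist_of_subwalk hp (p.isSubwalk_drop n), drop_length]

theorem dist_add_dist_of_mem_support {p : G.Walk a b} (hp : p.length = G.dist a b)
    (hw : w ∈ p.support) : G.dist a w + G.dist w b = G.dist a b := by
  obtain ⟨n, rfl, hn⟩ := mem_support_iff_exists_getVert.mp hw
  rw [dist_start_getVert hp, dist_getVert_end hp]
  omega

theorem dist_getVert_getVert_le (p : G.Walk a b) (i j : ℕ) :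
    G.dist (p.getVert i) (p.getVert (i + j)) ≤ j := by
  have h := dist_le ((p.drop i).take j)
  rw [take_length, drop_getVert] at h
  omega

theorem le_dist_getVert_getVert {p : G.Walk a b} (hp : p.length = G.dist a b) {i j : ℕ}
    (hj : j ≤ p.length) : j - i ≤ G.dist (p.getVert i) (p.getVert j) := by
  have h := ((p.take i).reachable).dist_triangle_left (p.getVert j)
  rw [dist_start_getVert hp, dist_start_getVert hp] at h
  omega

theorem IsPath.append {p : G.Walk u v} {q : G.Walk v w} (hp : p.IsPath) (hq : q.IsPath)
    (h : ∀ x ∈ p.support, x ∈ q.support → x = v) : (p.append q).IsPath := by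
  rw [isPath_def, support_append, List.nodup_append]
  refine ⟨hp.support_nodup, hq.support_nodup.sublist (List.tail_sublist _), ?_⟩
  rintro x hx _ hy rfl
  have hq' := hq.support_nodup
  rw [← q.cons_tail_support] at hq'
  exact (List.nodup_cons.mp hq').1 (h x hx (List.mem_of_mem_tail hy) ▸ hy)

end Walk

theorem Reachable.exists_adj_dist_add_one (h : G.Reachable u v) (huv : u ≠ v) :
    ∃ w, G.Adj u w ∧ G.dist w v + 1 = G.dist u v := by
  obtain ⟨p, hp⟩ := h.exists_walk_length_eq_dist
  have hlen : 0 < p.length := hp ▸ h.pos_dist_of_ne huv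
  refine ⟨p.getVert 1, by simpa using p.adj_getVert_succ hlen, ?_⟩
  rw [Walk.dist_getVert_end hp]
  omega

theorem containsTripod_of_le_dist (hG : G.Connected) {c x₁ x₂ x₃ : V} {R r : ℕ} (hR : R ≤ r)
    (hc₁ : G.dist c x₁ ≤ r) (hc₂ : G.dist c x₂ ≤ r) (hc₃ : G.dist c x₃ ≤ r)
    (h₁₂ : 2 * r ≤ G.dist x₁ x₂) (h₁₃ : 2 * r ≤ G.dist x₁ x₃) (h₂₃ : 2 * r ≤ G.dist x₂ x₃) :
    ContainsTripod G R := by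
  have far : ∀ {x y : V} (p : G.Walk c y), p.length = G.dist c y → G.dist c y ≤ r →
      2 * r ≤ G.dist x y → ∀ z ∈ p.support, R ≤ G.dist x z := by
    intro x y p hp hcy hxy z hz
    have h₁ := p.dist_add_dist_of_mem_support hp hz
    have h₂ : G.dist x y ≤ G.dist x z + G.dist z y := hG.dist_triangle
    omega
  obtain ⟨p₁, hp₁, hl₁⟩ := hG.exists_path_of_dist c x₁
  obtain ⟨p₂, hp₂, hl₂⟩ := hG.exists_path_of_dist c x₂
  obtain ⟨p₃, hp₃, hl₃⟩ := hG.exists_path_of_dist c x₃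
  exact ⟨c, x₁, x₂, x₃, p₁, p₂, p₃, hp₁, hp₂, hp₃, far p₂ hl₂ hc₂ h₁₂, far p₃ hl₃ hc₃ h₁₃,
    far p₁ hl₁ hc₁ (h₁₂.trans_eq dist_comm), far p₃ hl₃ hc₃ h₂₃,
    far p₁ hl₁ hc₁ (h₁₃.trans_eq dist_comm), far p₂ hl₂ hc₂ (h₂₃.trans_eq dist_comm)⟩

theorem IsAcyclic.length_eq_dist (hG : G.IsAcyclic) {p : G.Walk u v} (hp : p.IsPath) :
    p.length = G.dist u v := by
  obtain ⟨q, hq, hql⟩ := p.reachable.exists_path_of_dist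
  rw [← hql, Subtype.mk.inj ((hG.subsingleton_path u v).elim ⟨p, hp⟩ ⟨q, hq⟩)]

/-- A geodesic from `c` to `u` meets `p` only in `c`, so appending it to `p` gives a path, and
paths in a forest are geodesics. -/
theorem IsAcyclic.dist_eq_dist_add_dist_of_forall_le (hG : G.IsAcyclic) {p : G.Walk a c}
    (hp : p.IsPath) (hcu : G.Reachable c u) (hc : ∀ z ∈ p.support, G.dist c u ≤ G.dist z u) :
    G.dist a u = G.dist a c + G.dist c u := by
  obtain ⟨q, hq, hql⟩ := hcu.exists_path_of_dist
  have hpq : (p.append q).IsPath := hp.append hq fun z hzp hzq => by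
    have h₁ := q.dist_add_dist_of_mem_support hql hzq
    have h₂ := hc z hzp
    obtain ⟨n, rfl, -⟩ := Walk.mem_support_iff_exists_getVert.mp hzq
    exact ((q.take n).reachable.dist_eq_zero_iff.mp (by omega)).symm
  rw [← hG.length_eq_dist hpq, Walk.length_append, hG.length_eq_dist hp, hql]

/-! ### Projection onto a geodesic -/

namespace Walk

variable {P : G.Walk a b} {m m' : ℕ}

/-- `P.getVert m` is the projection of `u` onto `P`: it lies on geodesics from both ends of `P`
to `u`. -/
def IsProjectionIndex (P : G.Walk a b) (u : V) (m : ℕ) : Prop :=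
  m ≤ P.length ∧ G.dist a u = m + G.dist (P.getVert m) u ∧
    G.dist b u = P.length - m + G.dist (P.getVert m) u

theorem IsProjectionIndex.unique (h : P.IsProjectionIndex u m) (h' : P.IsProjectionIndex u m') :
    m = m' := by
  obtain ⟨-, h₁, h₂⟩ := h
  obtain ⟨-, h₁', h₂'⟩ := h'
  omega

theorem isProjectionIndex_getVert (hP : P.length = G.dist a b) {k : ℕ} (hk : k ≤ P.length) :
    P.IsProjectionIndex (P.getVert k) k := by
  refine ⟨hk, ?_, ?_⟩
  · simp [dist_start_getVert hP, hk]
  · simp [dist_comm (u := b), dist_getVert_end hP]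

theorem IsProjectionIndex.exists_adj_closer (hG : G.Connected) (hP : P.length = G.dist a b)
    (h : P.IsProjectionIndex u m) (hu : u ≠ P.getVert m) :
    ∃ y, G.Adj u y ∧ P.IsProjectionIndex y m ∧
      G.dist (P.getVert m) y < G.dist (P.getVert m) u := by
  obtain ⟨hm, hau, hbu⟩ := h
  obtain ⟨y, hadj, hy⟩ := (hG u (P.getVert m)).exists_adj_dist_add_one hu
  rw [dist_comm, dist_comm (u := u)] at hy
  have hay : G.dist a y ≤ G.dist a (P.getVert m) + G.dist (P.getVert m) y := hG.dist_triangle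
  have hby : G.dist b y ≤ G.dist b (P.getVert m) + G.dist (P.getVert m) y := hG.dist_triangle
  have hau' : G.dist a u ≤ G.dist a y + G.dist y u := hG.dist_triangle
  have hbu' : G.dist b u ≤ G.dist b y + G.dist y u := hG.dist_triangle
  have hyu : G.dist y u = 1 := dist_eq_one_iff_adj.mpr hadj.symm
  rw [dist_start_getVert hP, min_eq_left hm] at hay
  rw [dist_comm (u := b) (v := P.getVert m), dist_getVert_end hP] at hby
  exact ⟨y, hadj, ⟨hm, by omega, by omega⟩, by omega⟩

theorem IsProjectionIndex.dist_lt (hG : G.Connected) (hP : P.length = G.dist a b)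
    (hmax : ∀ x y, G.dist x y ≤ G.dist a b) {R : ℕ} (hR : ¬ContainsTripod G R)
    (h : P.IsProjectionIndex u m) : G.dist (P.getVert m) u < R := by
  obtain ⟨hm, hau, hbu⟩ := h
  by_contra! hRr
  set r := G.dist (P.getVert m) u
  have hua := hmax a u
  have hub := hmax b u
  have h₁ : G.dist (P.getVert m) (P.getVert (m - r)) ≤ r := by
    simpa [dist_comm, show m - r + r = m by omega] using P.dist_getVert_getVert_le (m - r) r
  have h₁₂ := le_dist_getVert_getVert hP (i := m - r) (j := m + r) (by omega)
  have h₁₃ : G.dist a u ≤ G.dist a (P.getVert (m - r)) + G.dist (P.getVert (m - r)) u :=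
    hG.dist_triangle
  have h₂₃ : G.dist b u ≤ G.dist b (P.getVert (m + r)) + G.dist (P.getVert (m + r)) u :=
    hG.dist_triangle
  rw [dist_start_getVert hP] at h₁₃
  rw [dist_comm (u := b) (v := P.getVert (m + r)), dist_getVert_end hP] at h₂₃
  exact hR (containsTripod_of_le_dist hG hRr h₁ (P.dist_getVert_getVert_le m r) le_rfl
    (by omega) (by omega) (by omega))

end Walk

theorem IsTree.exists_isProjectionIndex (hG : G.IsTree) {P : G.Walk a b}
    (hP : P.length = G.dist a b) (u : V) : ∃ m, P.IsProjectionIndex u m := by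
  obtain ⟨m, hm, hmin⟩ := (Finset.range (P.length + 1)).exists_min_image
    (fun k => G.dist (P.getVert k) u) ⟨0, by simp⟩
  rw [Finset.mem_range, Nat.lt_succ_iff] at hm
  have hclosest : ∀ z ∈ P.support, G.dist (P.getVert m) u ≤ G.dist z u := by
    intro z hz
    obtain ⟨k, rfl, hk⟩ := Walk.mem_support_iff_exists_getVert.mp hz
    exact hmin k (by simpa [Nat.lt_succ_iff] using hk)
  have hPpath := P.isPath_of_length_eq_dist hP
  have hau := hG.isAcyclic.dist_eq_dist_add_dist_of_forall_le (hPpath.take m)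
    (hG.connected _ u) fun z hz => hclosest z ((P.isSubwalk_take m).support_subset hz)
  have hbu := hG.isAcyclic.dist_eq_dist_add_dist_of_forall_le (hPpath.drop m).reverse
    (hG.connected _ u) fun z hz =>
      hclosest z ((P.isSubwalk_drop m).support_subset (by simpa using hz))
  rw [Walk.dist_start_getVert hP, min_eq_left hm] at hau
  rw [dist_comm (u := b) (v := P.getVert m), Walk.dist_getVert_end hP] at hbu
  exact ⟨m, hm, hau, hbu⟩

/-! ### Tours -/

noncomputable def tourLength (G : SimpleGraph V) : List V → ℕ
  | x :: y :: l => G.dist x y + G.tourLength (y :: l)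
  | _ => 0

@[simp] theorem tourLength_nil : G.tourLength [] = 0 := rfl

@[simp] theorem tourLength_singleton : G.tourLength [x] = 0 := rfl

@[simp] theorem tourLength_cons_cons (l : List V) :
    G.tourLength (x :: y :: l) = G.dist x y + G.tourLength (y :: l) := rfl

theorem tourLength_append_cons (l m : List V) :
    G.tourLength (l ++ x :: m) = G.tourLength (l ++ [x]) + G.tourLength (x :: m) := by
  induction l with
  | nil => simp
  | cons z l ih => cases l <;> simp_all [Nat.add_assoc]

theorem tourLength_add_tourLength_le_append (l m : List V) :
    G.tourLength l + G.tourLength m ≤ G.tourLength (l ++ m) := by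
  cases m with
  | nil => simp
  | cons x m =>
    rw [tourLength_append_cons]
    gcongr
    induction l with
    | nil => simp
    | cons z l ih => cases l <;> simp_all

theorem tourLength_le_of_isInfix {l m : List V} (h : l <:+: m) :
    G.tourLength l ≤ G.tourLength m := by
  obtain ⟨s, t, rfl⟩ := h
  calc G.tourLength l ≤ G.tourLength s + G.tourLength l + G.tourLength t := by omega
    _ ≤ G.tourLength (s ++ l ++ t) := by
      grw [tourLength_add_tourLength_le_append, tourLength_add_tourLength_le_append]

theorem dist_le_tourLength (hG : G.Connected) (l : List V) :
    G.dist x y ≤ G.tourLength (x :: (l ++ [y])) := by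
  induction l generalizing x with
  | nil => simp
  | cons z l ih =>
    have := @ih z
    have : G.dist x y ≤ G.dist x z + G.dist z y := hG.dist_triangle
    simp only [List.cons_append, tourLength_cons_cons] at *
    omega

theorem tourLength_cons_le (h : G.Reachable x y) (l : List V) :
    G.tourLength (x :: l) ≤ G.dist x y + G.tourLength (y :: l) := by
  cases l with
  | nil => simp
  | cons z l =>
    have := h.dist_triangle_left z
    simp only [tourLength_cons_cons]
    omega

theorem tourLength_append_singleton_le (h : G.Reachable x y) (l : List V) :
    G.tourLength (l ++ [y]) ≤ G.tourLength (l ++ [x]) + G.dist x y := by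
  induction l with
  | nil => simp
  | cons z l ih =>
    cases l with
    | nil => simpa using h.dist_triangle_right z
    | cons w l =>
      simp only [List.cons_append, tourLength_cons_cons] at *
      omega

open Finset in
/-- The depth-first traversal of a subtree rooted at `r`. -/
theorem exists_closed_tour [DecidableEq V] (r : V) (S : Finset V) (hr : r ∈ S)
    (hS : ∀ u ∈ S, u ≠ r → ∃ y ∈ S, G.Adj u y ∧ G.dist r y < G.dist r u) :
    ∃ l : List V, l.Nodup ∧ l.head? = some r ∧ (∀ u, u ∈ l ↔ u ∈ S) ∧
      G.tourLength (l ++ [r]) + 2 ≤ 2 * #S := by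
  induction S using Finset.strongInduction with
  | H S ih =>
  by_cases hsingle : ∀ u ∈ S, u = r
  · obtain rfl : S = {r} := eq_singleton_iff_unique_mem.mpr ⟨hr, hsingle⟩
    exact ⟨[r], by simp, rfl, by simp, by simp⟩
  push Not at hsingle
  obtain ⟨u₀, hu₀, hu₀r⟩ := hsingle
  -- remove a vertex `x` farthest from `r` and reinsert it right after a neighbour `y`
  obtain ⟨x, hx, hxmax⟩ := S.exists_max_image (G.dist r) ⟨r, hr⟩
  have hxr : x ≠ r := by
    rintro rfl
    obtain ⟨y, -, -, hy⟩ := hS u₀ hu₀ hu₀r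
    have := hxmax u₀ hu₀
    simp only [dist_self] at this
    omega
  obtain ⟨y, hy, hxy, hyx⟩ := hS x hx hxr
  have hS' : ∀ u ∈ S.erase x, u ≠ r → ∃ y ∈ S.erase x, G.Adj u y ∧ G.dist r y < G.dist r u := by
    intro u hu hur
    obtain ⟨y', hy', hadj, hlt⟩ := hS u (mem_of_mem_erase hu) hur
    refine ⟨y', mem_erase.mpr ⟨?_, hy'⟩, hadj, hlt⟩
    rintro rfl
    have := hxmax u (mem_of_mem_erase hu)
    omega
  obtain ⟨l, hnd, hhead, hmem, hlen⟩ :=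
    ih (S.erase x) (erase_ssubset hx) (mem_erase.mpr ⟨hxr.symm, hr⟩) hS'
  have hyx' : y ≠ x := by rintro rfl; omega
  obtain ⟨A, B, rfl⟩ := List.append_of_mem ((hmem y).mpr (mem_erase.mpr ⟨hyx', hy⟩))
  have hperm : (A ++ y :: x :: B).Perm (x :: (A ++ y :: B)) := by
    simpa using List.perm_middle (l₁ := A ++ [y]) (l₂ := B) (a := x)
  refine ⟨A ++ y :: x :: B, hperm.nodup_iff.mpr
    (List.nodup_cons.mpr ⟨fun h => notMem_erase x S ((hmem x).mp h), hnd⟩),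
    by simpa [List.head?_append] using hhead, fun u => ?_, ?_⟩
  · rw [hperm.mem_iff, List.mem_cons, hmem, mem_erase]
    by_cases hux : u = x <;> simp [hux, hx]
  · have hnew : G.tourLength (A ++ y :: x :: B ++ [r]) =
        G.tourLength (A ++ [y]) + G.dist y x + G.tourLength (x :: (B ++ [r])) := by
      rw [List.append_assoc, List.cons_append, List.cons_append, tourLength_append_cons,
        tourLength_cons_cons, Nat.add_assoc]
    have hold : G.tourLength (A ++ y :: B ++ [r]) =
        G.tourLength (A ++ [y]) + G.tourLength (y :: (B ++ [r])) := by
      rw [List.append_assoc, List.cons_append, tourLength_append_cons]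
    have hdetour := tourLength_cons_le hxy.reachable (B ++ [r])
    have hcard := card_erase_add_one hx
    rw [dist_eq_one_iff_adj.mpr hxy.symm] at hnew
    rw [dist_eq_one_iff_adj.mpr hxy] at hdetour
    omega

theorem tourLength_flatMap_add_two_le (hG : G.Connected) {l : ℕ → List V} {c : ℕ → V}
    {w : ℕ → ℕ} (hhead : ∀ k, (l k).head? = some (c k))
    (htour : ∀ k, G.tourLength (l k ++ [c k]) + 2 ≤ 2 * w k)
    (hstep : ∀ k, G.dist (c k) (c (k + 1)) ≤ 1) (i n : ℕ) :
    G.tourLength ((List.range' i (n + 1)).flatMap l) + 2 ≤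
      2 * ∑ k ∈ Finset.Ico i (i + n + 1), w k := by
  induction n generalizing i with
  | zero =>
    have := G.tourLength_le_of_isInfix (List.prefix_append (l i) [c i]).isInfix
    have := htour i
    simp only [Nat.zero_add, List.range'_one, List.flatMap_singleton, Nat.add_zero,
      Nat.Ico_succ_singleton, Finset.sum_singleton]
    omega
  | succ n ih =>
    obtain ⟨t, ht⟩ := List.head?_eq_some_iff.mp (hhead (i + 1))
    have hrest : (List.range' (i + 1) (n + 1)).flatMap l =
        c (i + 1) :: (t ++ (List.range' (i + 2) n).flatMap l) := by
      rw [List.range'_succ, List.flatMap_cons, ht, List.cons_append]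
    have hih := ih (i + 1)
    rw [hrest] at hih
    -- passing from one tour to the next costs its return to `c i` plus one step
    have hjunction := tourLength_append_singleton_le (hG (c i) (c (i + 1))) (l i)
    have := htour i
    have := hstep i
    rw [List.range'_succ, List.flatMap_cons, hrest, tourLength_append_cons,
      Finset.sum_eq_sum_Ico_succ_bot (by omega), show i + (n + 1) + 1 = i + 1 + n + 1 by omega]
    omega

theorem exists_abs_sub_eq_tourLength {L : List V} (hL : L.Nodup) :
    ∃ f : V → ℝ, ∀ x y (Y : List V), x :: Y ++ [y] <:+: L →
      |f x - f y| = G.tourLength (x :: Y ++ [y]) := by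
  classical
  have suffix_eq : ∀ {A B : List V} {z : V}, L = A ++ z :: B → L.dropWhile (· ≠ z) = z :: B := by
    rintro A B z rfl
    have hz : z ∉ A := fun h => (List.nodup_append.mp hL).2.2 z h z (by simp) rfl
    rw [List.dropWhile_append_of_pos (by simpa using fun a ha => ne_of_mem_of_not_mem ha hz),
      List.dropWhile_cons_of_neg (by simp)]
  refine ⟨fun u => G.tourLength (L.dropWhile (· ≠ u)), ?_⟩
  rintro x y Y ⟨A, B, rfl⟩
  dsimp only
  rw [suffix_eq (A := A) (B := Y ++ y :: B) (by simp),
    suffix_eq (A := A ++ x :: Y) (B := B) (by simp),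
    show x :: (Y ++ y :: B) = (x :: Y) ++ y :: B by simp, tourLength_append_cons]
  simp

/-! ### Clustering along a spine -/

/-- A clustering of the vertices around a geodesic `spine` (the Voronoi cells along a longest path
of a tree): `u` lies in the cluster of `spine.getVert (index u)`. -/
structure SpineClustering (G : SimpleGraph V) (R : ℕ) where
  start : V
  finish : V
  spine : G.Walk start finish
  length_spine : spine.length = G.dist start finish
  index : V → ℕ
  index_le (u : V) : index u ≤ spine.length
  index_getVert {k : ℕ} : k ≤ spine.length → index (spine.getVert k) = k
  dist_lt (u : V) : G.dist (spine.getVert (index u)) u < R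
  exists_adj_closer (u : V) : u ≠ spine.getVert (index u) →
    ∃ y, G.Adj u y ∧ index y = index u ∧
      G.dist (spine.getVert (index u)) y < G.dist (spine.getVert (index u)) u

namespace SpineClustering

open Finset

variable {R : ℕ} (S : G.SpineClustering R) {i k n : ℕ}

theorem index_sub_index_le (hG : G.Connected) (p q : V) :
    S.index q - S.index p ≤ G.dist p q + 2 * R := by
  have h₁ := S.spine.le_dist_getVert_getVert S.length_spine (i := S.index p) (S.index_le q)
  have h₂ : G.dist (S.spine.getVert (S.index p)) (S.spine.getVert (S.index q)) ≤
      G.dist (S.spine.getVert (S.index p)) p + G.dist p (S.spine.getVert (S.index q)) :=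
    hG.dist_triangle
  have h₃ : G.dist p (S.spine.getVert (S.index q)) ≤
      G.dist p q + G.dist q (S.spine.getVert (S.index q)) :=
    hG.dist_triangle
  have h₄ := S.dist_lt p
  have h₅ := S.dist_lt q
  rw [dist_comm (u := q)] at h₃
  omega

section Tours

variable [Fintype V] [DecidableEq V]

/-- The `insert` only matters for `k > S.spine.length`, where it keeps the cluster nonempty. -/
def cluster (k : ℕ) : Finset V :=
  insert (S.spine.getVert k) ({u | S.index u = k} : Finset V)

theorem mem_cluster : u ∈ S.cluster k ↔ u = S.spine.getVert k ∨ S.index u = k := by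
  simp [cluster]

theorem index_of_mem_cluster (hk : k ≤ S.spine.length) (hu : u ∈ S.cluster k) :
    S.index u = k := by
  rcases S.mem_cluster.mp hu with rfl | h
  exacts [S.index_getVert hk, h]

theorem exists_cluster_tour (k : ℕ) :
    ∃ l : List V, l.Nodup ∧ l.head? = some (S.spine.getVert k) ∧
      (∀ u, u ∈ l ↔ u ∈ S.cluster k) ∧
      G.tourLength (l ++ [S.spine.getVert k]) + 2 ≤ 2 * #(S.cluster k) := by
  refine exists_closed_tour _ _ (mem_insert_self _ _) fun u hu hur => ?_
  have hidx : S.index u = k := (S.mem_cluster.mp hu).resolve_left hur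
  obtain ⟨y, hadj, hy, hlt⟩ := S.exists_adj_closer u (hidx ▸ hur)
  rw [hidx] at hlt
  exact ⟨y, S.mem_cluster.mpr (Or.inr (hy.trans hidx)), hadj, hlt⟩

noncomputable def tour (k : ℕ) : List V :=
  (S.exists_cluster_tour k).choose

theorem tour_spec (k : ℕ) :
    (S.tour k).Nodup ∧ (S.tour k).head? = some (S.spine.getVert k) ∧
      (∀ u, u ∈ S.tour k ↔ u ∈ S.cluster k) ∧
      G.tourLength (S.tour k ++ [S.spine.getVert k]) + 2 ≤ 2 * #(S.cluster k) :=
  (S.exists_cluster_tour k).choose_spec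

noncomputable def block (i n : ℕ) : List V :=
  (List.range' i (n + 1)).flatMap S.tour

theorem mem_block (hi : i ≤ S.index u) (hn : S.index u ≤ i + n) : u ∈ S.block i n :=
  List.mem_flatMap.mpr ⟨S.index u, List.mem_range'_1.mpr ⟨hi, by omega⟩,
    ((S.tour_spec _).2.2.1 u).mpr (S.mem_cluster.mpr (Or.inr rfl))⟩

theorem block_isInfix (h : i + n ≤ S.spine.length) :
    S.block i n <:+: S.block 0 S.spine.length := by
  refine List.IsInfix.flatMap ?_ _
  rw [show S.spine.length + 1 = i + ((n + 1) + (S.spine.length - i - n)) by omega,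
    ← List.range'_append_1 (s := 0) (m := i), ← List.range'_append_1 (s := 0 + i) (m := n + 1),
    Nat.zero_add, ← List.append_assoc]
  exact List.infix_append _ _ _

theorem nodup_block : (S.block 0 S.spine.length).Nodup := by
  refine List.nodup_flatMap.mpr ⟨fun k _ => (S.tour_spec k).1,
    (List.nodup_range' (s := 0) (n := S.spine.length + 1)).pairwise_of_forall_ne
      fun k hk k' hk' hne u hu hu' => hne ?_⟩
  rw [List.mem_range'_1] at hk hk'
  rw [← S.index_of_mem_cluster (by omega) (((S.tour_spec k).2.2.1 u).mp hu),
    ← S.index_of_mem_cluster (by omega) (((S.tour_spec k').2.2.1 u).mp hu')]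

theorem sum_card_cluster_le (hG : G.Connected) (h : i + n ≤ S.spine.length) :
    ∑ k ∈ Ico i (i + n + 1), #(S.cluster k) ≤
      {u | G.dist (S.spine.getVert i) u ≤ n + R}.ncard := by
  rw [← card_biUnion, ← Set.ncard_coe_finset]
  · refine Set.ncard_le_ncard (fun u hu => ?_)
    simp only [coe_biUnion, coe_Ico, Set.mem_iUnion, Set.mem_Ico, mem_coe] at hu
    obtain ⟨k, ⟨hik, hkn⟩, hu⟩ := hu
    have hidx := S.index_of_mem_cluster (by omega) hu
    have h₁ := S.spine.dist_getVert_getVert_le i (k - i)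
    have h₂ := S.dist_lt u
    have h₃ : G.dist (S.spine.getVert i) u ≤
        G.dist (S.spine.getVert i) (S.spine.getVert k) + G.dist (S.spine.getVert k) u :=
      hG.dist_triangle
    rw [Nat.add_sub_cancel' hik] at h₁
    rw [hidx] at h₂
    show G.dist (S.spine.getVert i) u ≤ n + R
    omega
  · intro k hk k' hk' hne
    simp only [coe_Ico, Set.mem_Ico] at hk hk'
    refine Finset.disjoint_left.mpr fun u hu hu' => hne ?_
    rw [← S.index_of_mem_cluster (by omega) hu, ← S.index_of_mem_cluster (by omega) hu']

theorem tourLength_block_add_two_le (hG : G.Connected) (h : i + n ≤ S.spine.length) :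
    G.tourLength (S.block i n) + 2 ≤ 2 * {u | G.dist (S.spine.getVert i) u ≤ n + R}.ncard :=
  (tourLength_flatMap_add_two_le hG (fun k => (S.tour_spec k).2.1)
    (fun k => (S.tour_spec k).2.2.2) (fun k => S.spine.dist_getVert_getVert_le k 1) i n).trans
    (Nat.mul_le_mul_left 2 (S.sum_card_cluster_le hG h))

theorem tourLength_block_le {Δ : ℝ} (hG : G.Connected)
    (hΔ : ∀ (v : V) (r : ℕ), 1 ≤ r → ({u : V | G.dist v u ≤ r}.ncard : ℝ) - 1 ≤ 2 * r * Δ)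
    {p q : V} (hpq : S.index p ≤ S.index q) (hne : p ≠ q) :
    (G.tourLength (S.block (S.index p) (S.index q - S.index p)) : ℝ) ≤
      16 * Δ * R * G.dist p q := by
  set i := S.index p
  set n := S.index q - S.index p
  have hin : i + n ≤ S.spine.length := by
    have := S.index_le q
    omega
  have hR : 1 ≤ R := Nat.one_le_of_lt (S.dist_lt p)
  have hd : 1 ≤ G.dist p q := hG.pos_dist_of_ne hne
  have hnR : n + R ≤ 4 * G.dist p q * R := by nlinarith [S.index_sub_index_le hG p q]
  have hblock := S.tourLength_block_add_two_le hG hin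
  have hdens := hΔ (S.spine.getVert i) (n + R) (by omega)
  have hN : 1 ≤ {u | G.dist (S.spine.getVert i) u ≤ n + R}.ncard :=
    (Set.ncard_pos (Set.toFinite _)).mpr ⟨S.spine.getVert i, by simp⟩
  have hnR' : ((n + R : ℕ) : ℝ) ≤ ((4 * G.dist p q * R : ℕ) : ℝ) := by exact_mod_cast hnR
  have hN' : (1 : ℝ) ≤ ({u | G.dist (S.spine.getVert i) u ≤ n + R}.ncard : ℕ) := by
    exact_mod_cast hN
  have hblock' : (G.tourLength (S.block i n) : ℝ) + 2 ≤
      2 * ({u | G.dist (S.spine.getVert i) u ≤ n + R}.ncard : ℕ) := by exact_mod_cast hblock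
  have hpos : (0 : ℝ) < n + R := by exact_mod_cast (by omega : 0 < n + R)
  push_cast at hnR' hdens
  have hΔ₀ : 0 ≤ Δ := by nlinarith
  nlinarith

end Tours

end SpineClustering

theorem SpineClustering.exists_embedding [Fintype V] {R : ℕ} (S : G.SpineClustering R)
    (hG : G.Connected) {Δ : ℝ}
    (hΔ : ∀ (v : V) (r : ℕ), 1 ≤ r → ({u : V | G.dist v u ≤ r}.ncard : ℝ) - 1 ≤ 2 * r * Δ) :
    ∃ f : V → ℝ, ∀ p q : V,
      (G.dist p q : ℝ) ≤ |f p - f q| ∧ |f p - f q| ≤ 16 * Δ * R * G.dist p q := by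
  classical
  obtain ⟨f, hf⟩ := exists_abs_sub_eq_tourLength (G := G) S.nodup_block
  have key : ∀ p q, S.index p ≤ S.index q → p ≠ q →
      (G.dist p q : ℝ) ≤ |f p - f q| ∧ |f p - f q| ≤ 16 * Δ * R * G.dist p q := by
    intro p q hpq hne
    have hin : S.index p + (S.index q - S.index p) ≤ S.spine.length := by
      have := S.index_le q
      omega
    obtain ⟨Y, hY⟩ := List.exists_segment_isInfix
      (S.mem_block (n := S.index q - S.index p) le_rfl (by omega))
      (S.mem_block (u := q) (n := S.index q - S.index p) hpq (by omega)) hne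
    have hbound := S.tourLength_block_le hG hΔ hpq hne
    rcases hY with hY | hY
    · rw [hf p q Y (hY.trans (S.block_isInfix hin))]
      exact ⟨by exact_mod_cast dist_le_tourLength hG Y,
        le_trans (by exact_mod_cast tourLength_le_of_isInfix hY) hbound⟩
    · rw [abs_sub_comm, hf q p Y (hY.trans (S.block_isInfix hin)), dist_comm]
      exact ⟨by exact_mod_cast dist_le_tourLength hG Y,
        le_trans (by exact_mod_cast tourLength_le_of_isInfix hY) (dist_comm (G := G) ▸ hbound)⟩
  refine ⟨f, fun p q => ?_⟩
  obtain rfl | hne := eq_or_ne p q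
  · simp
  rcases le_total (S.index p) (S.index q) with h | h
  · exact key p q h hne
  · simpa [abs_sub_comm, dist_comm] using key q p h hne.symm

theorem IsTree.exists_spineClustering [Finite V] (hG : G.IsTree) {R : ℕ}
    (htripod : ¬ContainsTripod G R) : Nonempty (G.SpineClustering R) := by
  have hconn := hG.connected
  have := hconn.nonempty
  obtain ⟨a, b, hab⟩ := G.exists_dist_eq_diam
  have hmax : ∀ x y, G.dist x y ≤ G.dist a b :=
    fun x y => hab ▸ dist_le_diam (connected_iff_ediam_ne_top.mp hconn)
  obtain ⟨P, hP⟩ := hconn.exists_walk_length_eq_dist a b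
  choose index hindex using hG.exists_isProjectionIndex hP
  refine ⟨⟨a, b, P, hP, index, fun u => (hindex u).1,
    fun hk => ((Walk.isProjectionIndex_getVert hP hk).unique (hindex _)).symm,
    fun u => (hindex u).dist_lt hconn hP hmax htripod, fun u hu => ?_⟩⟩
  obtain ⟨y, hadj, hy, hlt⟩ := (hindex u).exists_adj_closer hconn hP hu
  exact ⟨y, hadj, (hindex y).unique hy, hlt⟩

end SimpleGraph

/-- There is an absolute constant `C > 0` such that every tree
`T` with local density at most `Δ` containing no `R`-tripod (`R ≥ 1`) admits an
embedding `f : V(T) → ℝ` with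
`d_T(p,q) ≤ |f p − f q| ≤ C·Δ·R·d_T(p,q)` for all `p, q`. -/
theorem tree_no_tripod_embeds_into_line :
    ∃ C : ℝ, 0 < C ∧
      ∀ (V : Type) [Fintype V], ∀ (T : SimpleGraph V), T.IsTree →
        ∀ (R : ℕ), 1 ≤ R →
        ∀ (Δ : ℝ),
          (∀ (v : V) (r : ℕ), 1 ≤ r →
            ({u : V | T.dist v u ≤ r}.ncard : ℝ) - 1 ≤ 2 * r * Δ) →
          ¬ ContainsTripod T R →
          ∃ f : V → ℝ, ∀ p q : V,
            (T.dist p q : ℝ) ≤ |f p - f q| ∧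
            |f p - f q| ≤ C * Δ * R * T.dist p q := by
  refine ⟨16, by norm_num, fun V _ T hT R _ Δ hΔ htripod => ?_⟩
  obtain ⟨S⟩ := hT.exists_spineClustering htripod
  exact S.exists_embedding hT.connected hΔ
end
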